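/- arXiv:1403.4653 — 4 statements merged into one kernel-verified Lean document; each statement's English description precedes it below -/
import Mathlib

section
/- For any integer r ≥ 4, if x₀ = 2^{1/(r-1)}, then (1 + x₀)^{r-1} is irrational. -/
/-!
Put `n = r - 1`. By Eisenstein at `2`, `X ^ n - 2` is the minimal polynomial of `x₀` over `ℚ`.
If `(1 + x₀) ^ n = q` were rational, `x₀` would be a root of the monic degree-`n` polynomial
`(X + 1) ^ n - q`, which would then have to be that minimal polynomial; but their coefficients
of `X ^ (n - 1)` are `n` and `0`.
-/

open Polynomial

theorem isEisensteinAt_X_pow_sub_C {R : Type*} [CommRing R] [Nontrivial R] {P : Ideal R}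
    (hP : P ≠ ⊤) {n : ℕ} (hn : n ≠ 0) {a : R} (ha : a ∈ P) (ha' : a ∉ P ^ 2) :
    (X ^ n - C a).IsEisensteinAt P := by
  refine (monic_X_pow_sub_C a hn).isEisensteinAt_of_mem_of_notMem hP (fun {m} hm => ?_) ?_
  · rw [natDegree_X_pow_sub_C] at hm
    simpa [coeff_X_pow, hm.ne, coeff_C, apply_ite] using fun _ : m = 0 => ha
  · simpa [coeff_X_pow, hn.symm] using ha'

theorem irreducible_X_pow_sub_C_two {n : ℕ} (hn : n ≠ 0) : Irreducible (X ^ n - C (2 : ℚ)) := by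
  have hprime : (Ideal.span {(2 : ℤ)}).IsPrime :=
    (Ideal.span_singleton_prime two_ne_zero).mpr Int.prime_two
  have hEis : (X ^ n - C (2 : ℤ)).IsEisensteinAt (Ideal.span {2}) :=
    isEisensteinAt_X_pow_sub_C hprime.ne_top hn (Ideal.mem_span_singleton_self 2) (by
      rw [Ideal.span_singleton_pow, Ideal.mem_span_singleton]; decide)
  have hmonic := monic_X_pow_sub_C (2 : ℤ) hn
  have hirr := hEis.irreducible hprime hmonic.isPrimitive (by rw [natDegree_X_pow_sub_C]; omega)
  have := hmonic.irreducible_iff_irreducible_map_fraction_map (K := ℚ) |>.mp hirr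
  rwa [Polynomial.map_sub, Polynomial.map_pow, map_X, map_C, map_ofNat] at this

theorem minpoly_two_rpow_inv_natCast {n : ℕ} (hn : n ≠ 0) :
    minpoly ℚ ((2 : ℝ) ^ (n⁻¹ : ℝ)) = X ^ n - C 2 :=
  (minpoly.eq_of_irreducible_of_monic (irreducible_X_pow_sub_C_two hn)
    (by simp [Real.rpow_inv_natCast_pow zero_le_two hn]) (monic_X_pow_sub_C 2 hn)).symm

theorem minpoly_eq_X_add_C_pow_sub_C {K L : Type*} [Field K] [Ring L] [Nontrivial L]
    [Algebra K L] {x : L} (hx : IsIntegral K x) {c q : K}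
    (h : (x + algebraMap K L c) ^ (minpoly K x).natDegree = algebraMap K L q) :
    minpoly K x = (X + C c) ^ (minpoly K x).natDegree - C q := by
  set n := (minpoly K x).natDegree
  have hn : 0 < n := minpoly.natDegree_pos hx
  have hdeg : ((X + C c) ^ n - C q).natDegree = n := by
    rw [natDegree_sub_C, natDegree_pow, natDegree_X_add_C, mul_one]
  have hmonic : ((X + C c) ^ n - C q).Monic := by
    refine ((monic_X_add_C c).pow n).sub_of_left (degree_C_le.trans_lt ?_)
    rw [degree_pow, degree_X_add_C, nsmul_one]
    exact_mod_cast hn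
  refine (eq_of_monic_of_dvd_of_natDegree_le (minpoly.monic hx) hmonic ?_ hdeg.le).symm
  exact minpoly.dvd K x (by simp [h])

theorem X_pow_sub_C_ne_X_add_C_pow_sub_C {K : Type*} [Field K] [CharZero K] {n : ℕ} (hn : 2 ≤ n)
    {a b c : K} (hc : c ≠ 0) : X ^ n - C a ≠ (X + C c) ^ n - C b := by
  intro h
  have hchoose : n.choose (n - 1) = n :=
    (Nat.choose_symm_of_eq_add (by omega)).trans n.choose_one_right
  simpa [coeff_X_pow, coeff_C, coeff_X_add_C_pow, show n - 1 ≠ n by omega, show n - 1 ≠ 0 by omega,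
    hchoose, hc, show n ≠ 0 by omega] using congrArg (coeff · (n - 1)) h

theorem stmt_4 (r : ℕ) (hr : 4 ≤ r) (x₀ : ℝ) (hx₀ : x₀ = (2:ℝ) ^ (((r:ℝ) - 1)⁻¹)) :
    Irrational ((1 + x₀) ^ (r - 1)) := by
  set n := r - 1
  have hn : 2 ≤ n := by omega
  have hmin : minpoly ℚ x₀ = X ^ n - C 2 := by
    rw [hx₀, ← Nat.cast_pred (by omega)]
    exact minpoly_two_rpow_inv_natCast (by omega)
  have hdeg : (minpoly ℚ x₀).natDegree = n := by rw [hmin, natDegree_X_pow_sub_C]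
  rintro ⟨q, hq⟩
  have hint : IsIntegral ℚ x₀ := minpoly.ne_zero_iff.mp (hmin ▸ X_pow_sub_C_ne_zero (by omega) 2)
  have hmin' := minpoly_eq_X_add_C_pow_sub_C hint (c := 1) (q := q)
    (by rw [hdeg, map_one, add_comm, ← hq]; rfl)
  rw [hdeg, hmin] at hmin'
  exact X_pow_sub_C_ne_X_add_C_pow_sub_C hn one_ne_zero hmin'
end

section
/- Let r ≥ 2, α, β ∈ [0,1), and 0 ≤ ε ≤ α. Then α ⊕_r β ≥ (α - ε) ⊕_r β + ε · ((1-β)^{1/(r-1)} / (1 + (1-β)^{1/(r-1)}))^r, where α ⊕_r β = 1 - (1-α)(1-β)/((1-α)^{1/(r-1)} + (1-β)^{1/(r-1)})^{r-1}. -/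
/-!
With `c = 1 - β` and `s = r - 1`, one has `1 - α ⊕_r β = g (1 - α)` for
`g x = x c / (x^{1/s} + c^{1/s})^s`. Writing `c = b^s`, the derivative of `g` is
`(b / (x^{1/s} + b))^r`, which on `(0, 1]` is at least `(b / (1 + b))^r`; the mean value
theorem on `[1 - α, 1 - α + ε]` gives the inequality.
-/

open Set

/-- `oplusCompl s (1 - α) (1 - β) = 1 - α ⊕_{s+1} β`. -/
noncomputable def oplusCompl (s : ℕ) (x y : ℝ) : ℝ :=
  x * y / (x ^ (s : ℝ)⁻¹ + y ^ (s : ℝ)⁻¹) ^ s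

theorem hasDerivAt_oplusCompl {s : ℕ} (hs : s ≠ 0) {c x : ℝ} (hc : 0 < c) (hx : 0 < x) :
    HasDerivAt (oplusCompl s · c)
      ((c ^ (s : ℝ)⁻¹ / (x ^ (s : ℝ)⁻¹ + c ^ (s : ℝ)⁻¹)) ^ (s + 1)) x := by
  set b := c ^ (s : ℝ)⁻¹
  set u := x ^ (s : ℝ)⁻¹
  have hcb : c = b ^ s := (Real.rpow_inv_natCast_pow hc.le hs).symm
  have hxu : s * (x * ((s : ℝ)⁻¹ * x ^ ((s : ℝ)⁻¹ - 1))) = u := by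
    rw [Real.rpow_sub_one hx.ne']
    field_simp
    rw [one_div]
  have hden := ((Real.hasDerivAt_rpow_const (p := (s : ℝ)⁻¹) (Or.inl hx.ne')).add_const b).fun_pow s
  refine (((hasDerivAt_id x).mul_const c).div hden (by positivity)).congr_deriv ?_
  obtain ⟨t, rfl⟩ : ∃ t, s = t + 1 := Nat.exists_eq_add_one.2 (Nat.pos_of_ne_zero hs)
  rw [hcb, id, one_mul, Nat.add_sub_cancel, div_pow, div_eq_div_iff (by positivity) (by positivity)]
  linear_combination -(b ^ (t + 1) * (u + b) ^ (2 * t + 2)) * hxu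

theorem mul_sub_le_oplusCompl_sub {s : ℕ} (hs : s ≠ 0) {c x y : ℝ} (hc : 0 < c) (hx : 0 < x)
    (hxy : x ≤ y) (hy : y ≤ 1) :
    (c ^ (s : ℝ)⁻¹ / (1 + c ^ (s : ℝ)⁻¹)) ^ (s + 1) * (y - x)
      ≤ oplusCompl s y c - oplusCompl s x c := by
  have hderiv (z : ℝ) (hz : z ∈ Ioc 0 1) := hasDerivAt_oplusCompl hs hc hz.1
  refine (convex_Ioc 0 1).mul_sub_le_image_sub_of_le_deriv
    (fun z hz => (hderiv z hz).continuousAt.continuousWithinAt)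
    (fun z hz => (hderiv z (interior_subset hz)).differentiableAt.differentiableWithinAt)
    (fun z hz => ?_) x ⟨hx, hxy.trans hy⟩ y ⟨hx.trans_le hxy, hy⟩ hxy
  rw [(hderiv z (interior_subset hz)).deriv]
  obtain ⟨hz0, hz1⟩ : z ∈ Ioo 0 1 := by rwa [interior_Ioc] at hz
  gcongr
  exact Real.rpow_le_one hz0.le hz1.le (by positivity)

theorem stmt_8 (r : ℕ) (hr : 2 ≤ r) (α β ε : ℝ)
    (hα : α ∈ Set.Ico (0:ℝ) 1) (hβ : β ∈ Set.Ico (0:ℝ) 1)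
    (hε : 0 ≤ ε) (hεα : ε ≤ α) :
    1 - (1 - α) * (1 - β) /
        ((1 - α) ^ (((r:ℝ) - 1)⁻¹) + (1 - β) ^ (((r:ℝ) - 1)⁻¹)) ^ (r - 1)
    ≥ (1 - (1 - (α - ε)) * (1 - β) /
        ((1 - (α - ε)) ^ (((r:ℝ) - 1)⁻¹) + (1 - β) ^ (((r:ℝ) - 1)⁻¹)) ^ (r - 1))
      + ε * ((1 - β) ^ (((r:ℝ) - 1)⁻¹) / (1 + (1 - β) ^ (((r:ℝ) - 1)⁻¹))) ^ r := by
  obtain ⟨s, rfl⟩ : ∃ s, r = s + 1 := Nat.exists_eq_add_one.2 (by omega)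
  have hmvt := mul_sub_le_oplusCompl_sub (s := s) (c := 1 - β) (x := 1 - α) (y := 1 - (α - ε))
    (by omega) (by linarith [hβ.2]) (by linarith [hα.2]) (by linarith) (by linarith)
  rw [Nat.cast_add_one, add_sub_cancel_right, Nat.add_sub_cancel]
  unfold oplusCompl at hmvt
  linarith
end

section
/- For any subset A ⊆ [0,1) with positive Lebesgue measure that is a Borel set, if A is closed under the operation ⊕_r (with r ≥ 2), then A contains an open interval. -/
noncomputable def oplus (r : ℕ) (a b : ℝ) : ℝ :=
  if a = 1 ∧ b = 1 then 1
  else 1 - (1 - a) * (1 - b) /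
    ((1 - a) ^ (((r:ℝ) - 1)⁻¹) + (1 - b) ^ (((r:ℝ) - 1)⁻¹)) ^ (r - 1)

/-!
The map `x ↦ 1 - x ^ (-(r - 1))`, the inverse of the paper's `h(x) = (1 - x) ^ (-1/(r - 1))`,
is an isomorphism from `((0, ∞), +)` onto `((-∞, 1), ⊕ᵣ)`. Pulling `A` back along it gives an
additively closed set `B ⊆ (0, ∞)`, which has positive measure because the map is differentiable
and hence sends null sets to null sets. By Steinhaus's theorem `B + B ⊆ B` is a neighbourhood of
some point, and the increasing map carries an interval around that point into `A`.
-/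

open MeasureTheory Set Filter Topology
open scoped Pointwise

theorem exists_measure_inter_preimage_sub_pos {G : Type*} [AddGroup G] [MeasurableSpace G]
    [MeasurableAdd₂ G] [MeasurableNeg G] (μ : Measure G) [SFinite μ] [μ.IsAddRightInvariant]
    {E F : Set G} (hE : MeasurableSet E) (hF : MeasurableSet F) (hEpos : 0 < μ E)
    (hFpos : 0 < μ F) :
    ∃ t, 0 < μ (F ∩ (t - ·) ⁻¹' E) := by
  set P := (fun z : G × G => (z.1 - z.2, z.2)) ⁻¹' E ×ˢ F
  have hP : MeasurableSet P :=
    (measurable_fst.sub measurable_snd).prodMk measurable_snd (hE.prod hF)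
  have hPpos : 0 < (μ.prod μ) P := by
    rw [(measurePreserving_sub_prod μ μ).measure_preimage (hE.prod hF).nullMeasurableSet,
      Measure.prod_prod]
    exact ENNReal.mul_pos hEpos.ne' hFpos.ne'
  by_contra! h
  have hslice (t : G) : Prod.mk t ⁻¹' P = F ∩ (t - ·) ⁻¹' E := Set.ext fun _ => and_comm
  refine hPpos.ne' ((Measure.measure_prod_null hP).2 (Eventually.of_forall fun t => ?_))
  simpa [hslice] using h t

theorem exists_add_mem_nhds_of_addHaar_pos {G : Type*} [AddCommGroup G] [TopologicalSpace G]
    [IsTopologicalAddGroup G] [LocallyCompactSpace G] [SecondCountableTopology G]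
    [MeasurableSpace G] [BorelSpace G] (μ : Measure G) [μ.IsAddHaarMeasure] [μ.InnerRegular]
    {E F : Set G} (hE : MeasurableSet E) (hF : MeasurableSet F) (hEpos : 0 < μ E)
    (hFpos : 0 < μ F) :
    ∃ t, E + F ∈ 𝓝 t := by
  obtain ⟨t, ht⟩ := exists_measure_inter_preimage_sub_pos μ hE hF hEpos hFpos
  set S := F ∩ (t - ·) ⁻¹' E
  have hS : S - S ∈ 𝓝 0 := Measure.sub_mem_nhds_zero_of_addHaar_pos μ S
    (hF.inter (hE.preimage (measurable_const.sub measurable_id))) ht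
  have htS : t +ᵥ (S - S) ∈ 𝓝 t := by simpa using (vadd_mem_nhds_vadd_iff t).2 hS
  refine ⟨t, mem_of_superset htS ?_⟩
  rintro _ ⟨_, ⟨x, ⟨hxF, -⟩, y, ⟨-, hyE⟩, rfl⟩, rfl⟩
  exact ⟨t - y, hyE, x, hxF, by simp only [vadd_eq_add]; abel⟩

lemma rpow_neg_rpow_inv {s x : ℝ} (hs : s ≠ 0) (hx : 0 ≤ x) : (x ^ (-s)) ^ s⁻¹ = x⁻¹ := by
  rw [← Real.rpow_mul hx, neg_mul, mul_inv_cancel₀ hs, Real.rpow_neg_one]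

noncomputable def addToOplus (r : ℕ) (x : ℝ) : ℝ := 1 - x ^ (-((r : ℝ) - 1))

theorem measurable_addToOplus (r : ℕ) : Measurable (addToOplus r) := by
  unfold addToOplus
  fun_prop

theorem differentiableOn_addToOplus (r : ℕ) : DifferentiableOn ℝ (addToOplus r) (Ioi 0) :=
  fun _ hx =>
    ((Real.differentiableAt_rpow_const_of_ne _ (ne_of_gt hx)).const_sub 1).differentiableWithinAt

theorem oplus_addToOplus {r : ℕ} (hr : 1 < r) {x y : ℝ} (hx : 0 < x) (hy : 0 < y) :
    oplus r (addToOplus r x) (addToOplus r y) = addToOplus r (x + y) := by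
  have hx1 : addToOplus r x ≠ 1 := by simp [addToOplus, (Real.rpow_pos_of_pos hx _).ne']
  rw [oplus, if_neg (fun h => hx1 h.1)]
  unfold addToOplus
  set s : ℝ := (r : ℝ) - 1
  have hs : 0 < s := by simp [s, hr]
  have hpow : ((r - 1 : ℕ) : ℝ) = s := by rw [Nat.cast_sub hr.le, Nat.cast_one]
  rw [sub_sub_cancel, sub_sub_cancel, rpow_neg_rpow_inv hs.ne' hx.le,
    rpow_neg_rpow_inv hs.ne' hy.le, ← Real.rpow_natCast, hpow, inv_add_inv hx.ne' hy.ne',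
    Real.div_rpow (by positivity) (by positivity), Real.mul_rpow hx.le hy.le,
    Real.rpow_neg hx.le, Real.rpow_neg hy.le, Real.rpow_neg (by positivity)]
  have := Real.rpow_pos_of_pos hx s
  have := Real.rpow_pos_of_pos hy s
  have := Real.rpow_pos_of_pos (add_pos hx hy) s
  field_simp

theorem addToOplus_strictMonoOn {r : ℕ} (hr : 1 < r) :
    StrictMonoOn (addToOplus r) (Ioi 0) := by
  intro x hx y _ hxy
  have hs : -((r : ℝ) - 1) < 0 := by simp [hr]
  simpa [addToOplus] using Real.rpow_lt_rpow_of_neg hx hxy hs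

theorem exists_addToOplus_eq {r : ℕ} (hr : 1 < r) {a : ℝ} (ha : a < 1) :
    ∃ x, 0 < x ∧ addToOplus r x = a := by
  have hs : ((r : ℝ) - 1) ≠ 0 := by simp [sub_ne_zero, hr.ne']
  refine ⟨(1 - a) ^ (-((r : ℝ) - 1)⁻¹), Real.rpow_pos_of_pos (by linarith) _, ?_⟩
  rw [addToOplus, ← Real.rpow_mul (by linarith), neg_mul_neg, inv_mul_cancel₀ hs,
    Real.rpow_one, sub_sub_cancel]

theorem Ioo_subset_image_addToOplus {r : ℕ} (hr : 1 < r) {a b : ℝ} (ha : 0 < a) (hb : 0 < b) :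
    Ioo (addToOplus r a) (addToOplus r b) ⊆ addToOplus r '' Ioo a b := by
  rintro v ⟨hav, hvb⟩
  have hb1 : addToOplus r b < 1 := by simpa [addToOplus] using Real.rpow_pos_of_pos hb _
  obtain ⟨x, hx, rfl⟩ := exists_addToOplus_eq hr (hvb.trans hb1)
  have hmono := addToOplus_strictMonoOn hr
  exact ⟨x, ⟨(hmono.lt_iff_lt ha hx).1 hav, (hmono.lt_iff_lt hx hb).1 hvb⟩, rfl⟩

theorem stmt_10 (r : ℕ) (hr : 2 ≤ r) (A : Set ℝ) (hA : A ⊆ Set.Ico 0 1)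
    (hmeas : MeasurableSet A) (hpos : 0 < MeasureTheory.volume A)
    (hclosed : ∀ a ∈ A, ∀ b ∈ A, oplus r a b ∈ A) :
    ∃ a b : ℝ, a < b ∧ Set.Ioo a b ⊆ A := by
  set B := Ioi 0 ∩ addToOplus r ⁻¹' A
  have hBmeas : MeasurableSet B :=
    measurableSet_Ioi.inter (hmeas.preimage (measurable_addToOplus r))
  have hAB : A ⊆ addToOplus r '' B := fun a ha => by
    obtain ⟨x, hx, rfl⟩ := exists_addToOplus_eq hr (hA ha).2
    exact ⟨x, ⟨hx, ha⟩, rfl⟩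
  have hBpos : 0 < volume B := by
    refine pos_of_ne_zero fun hB => hpos.ne' (measure_mono_null hAB ?_)
    exact addHaar_image_eq_zero_of_differentiableOn_of_addHaar_eq_zero volume
      ((differentiableOn_addToOplus r).mono inter_subset_left) hB
  have hBB : B + B ⊆ B := by
    rintro _ ⟨x, hx, y, hy, rfl⟩
    refine ⟨mem_Ioi.2 (add_pos hx.1 hy.1), ?_⟩
    rw [mem_preimage, ← oplus_addToOplus hr hx.1 hy.1]
    exact hclosed _ hx.2 _ hy.2
  obtain ⟨t, ht⟩ := exists_add_mem_nhds_of_addHaar_pos volume hBmeas hBmeas hBpos hBpos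
  replace ht : B ∈ 𝓝 t := mem_of_superset ht hBB
  have ht0 : 0 < t := (mem_of_mem_nhds ht).1
  obtain ⟨u, htu, hIco⟩ := exists_Ico_subset_of_mem_nhds ht ⟨t + 1, lt_add_one t⟩
  refine ⟨_, _, addToOplus_strictMonoOn hr ht0 (ht0.trans htu) htu, ?_⟩
  refine (Ioo_subset_image_addToOplus hr ht0 (ht0.trans htu)).trans ?_
  rw [image_subset_iff]
  exact Ioo_subset_Ico_self.trans (hIco.trans inter_subset_right)
end

section
/- Let G be an r-graph and H an s-graph (r,s ≥ 1), and let G*H be the (r+s)-graph on V(G) ⊔ V(H) with edges {e ∪ f : e ∈ E(G), f ∈ E(H)}. Then the Lagrangians satisfy λ(G*H) = λ(G) · λ(H) · C(r+s, r) · r^r s^s / (r+s)^{r+s}. -/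
/-! Every edge of G*H is a disjoint union of an edge of G and an edge of H, so for a weighting
x of V ⊔ W one has p_{G*H}(x) = C(r+s,r) · p_G(x|V) · p_H(x|W), since (r+s)! = C(r+s,r) r! s!.
By homogeneity p_G(x|V) ≤ a^r λ(G) and p_H(x|W) ≤ b^s λ(H), where a and b are the masses of x on
V and W, and weighted AM–GM bounds a^r b^s on a + b = 1 by its value at a = r/(r+s). Conversely,
optimal weightings of G and H scaled by r/(r+s) and s/(r+s) attain the bound. -/

open Finset

noncomputable def lag {V : Type*} [Fintype V] (r : ℕ) (E : Finset (Finset V)) : ℝ :=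
  sSup ((fun x : V → ℝ => (r.factorial : ℝ) * ∑ e ∈ E, ∏ i ∈ e, x i) '' stdSimplex ℝ V)

section Lagrangian

variable {V W : Type*}

def lagPoly (r : ℕ) (E : Finset (Finset V)) (x : V → ℝ) : ℝ :=
  r.factorial * ∑ e ∈ E, ∏ i ∈ e, x i

def joinEdges [DecidableEq V] [DecidableEq W] (EG : Finset (Finset V))
    (EH : Finset (Finset W)) : Finset (Finset (V ⊕ W)) :=
  (EG ×ˢ EH).image fun p =>
    p.1.map (Function.Embedding.inl : V ↪ V ⊕ W) ∪ p.2.map (Function.Embedding.inr : W ↪ V ⊕ W)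

section Polynomial

variable (r : ℕ) (E : Finset (Finset V))

lemma continuous_lagPoly : Continuous (lagPoly r E) :=
  continuous_const.mul <| continuous_finsetSum _ fun _ _ =>
    continuous_finsetProd _ fun i _ => continuous_apply i

lemma lagPoly_nonneg {x : V → ℝ} (hx : 0 ≤ x) : 0 ≤ lagPoly r E x :=
  mul_nonneg (Nat.cast_nonneg _) <| sum_nonneg fun _ _ => prod_nonneg fun i _ => hx i

lemma lagPoly_smul {r : ℕ} {E : Finset (Finset V)} (hE : ∀ e ∈ E, e.card = r) (c : ℝ)
    (x : V → ℝ) : lagPoly r E (c • x) = c ^ r * lagPoly r E x := by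
  simp only [lagPoly, Pi.smul_apply, smul_eq_mul, prod_mul_distrib, prod_const, mul_sum]
  exact sum_congr rfl fun e he => by rw [hE e he]; ring

variable [Fintype V]

lemma bddAbove_lagPoly_image : BddAbove (lagPoly r E '' stdSimplex ℝ V) :=
  ((isCompact_stdSimplex ℝ V).image (continuous_lagPoly r E)).bddAbove

lemma lagPoly_le_lag {x : V → ℝ} (hx : x ∈ stdSimplex ℝ V) : lagPoly r E x ≤ lag r E :=
  le_csSup (bddAbove_lagPoly_image r E) ⟨x, hx, rfl⟩

lemma lag_le_of_forall_lagPoly_le [Nonempty V] {c : ℝ}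
    (h : ∀ x ∈ stdSimplex ℝ V, lagPoly r E x ≤ c) : lag r E ≤ c := by
  classical
  exact csSup_le ⟨_, _, single_mem_stdSimplex ℝ (Classical.arbitrary V), rfl⟩
    (Set.forall_mem_image.2 h)

lemma exists_lagPoly_eq_lag [Nonempty V] : ∃ x ∈ stdSimplex ℝ V, lagPoly r E x = lag r E := by
  classical
  exact (isCompact_stdSimplex ℝ V).image (continuous_lagPoly r E) |>.sSup_mem
    ⟨_, _, single_mem_stdSimplex ℝ (Classical.arbitrary V), rfl⟩

lemma lag_nonneg [Nonempty V] : 0 ≤ lag r E := by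
  obtain ⟨x, hx, hxE⟩ := exists_lagPoly_eq_lag r E
  exact hxE ▸ lagPoly_nonneg r E hx.1

lemma lagPoly_le_sum_pow_mul_lag [Nonempty V] {r : ℕ} {E : Finset (Finset V)}
    (hE : ∀ e ∈ E, e.card = r) {x : V → ℝ} (hx : 0 ≤ x) :
    lagPoly r E x ≤ (∑ i, x i) ^ r * lag r E := by
  obtain ht | ht := (sum_nonneg fun i _ => hx i : 0 ≤ ∑ i, x i).eq_or_lt
  · obtain ⟨u, hu, -⟩ := exists_lagPoly_eq_lag r E
    have hx0 : x = (0 : ℝ) • u := by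
      rw [zero_smul]
      exact funext fun i => (sum_eq_zero_iff_of_nonneg fun j _ => hx j).1 ht.symm i (mem_univ i)
    rw [← ht, hx0, lagPoly_smul hE]
    exact mul_le_mul_of_nonneg_left (lagPoly_le_lag r E hu) (by positivity)
  · set t := ∑ i, x i
    have hxt : t⁻¹ • x ∈ stdSimplex ℝ V :=
      ⟨fun i => mul_nonneg (inv_nonneg.2 ht.le) (hx i), by
        simp only [Pi.smul_apply, smul_eq_mul, ← mul_sum, t, inv_mul_cancel₀ ht.ne']⟩
    calc lagPoly r E x = t ^ r * lagPoly r E (t⁻¹ • x) := by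
          rw [lagPoly_smul hE, ← mul_assoc, ← mul_pow, mul_inv_cancel₀ ht.ne', one_pow, one_mul]
      _ ≤ t ^ r * lag r E := by gcongr; exact lagPoly_le_lag r E hxt

end Polynomial

lemma map_inl_union_map_inr_eq_disjSum [DecidableEq V] [DecidableEq W] (e : Finset V)
    (f : Finset W) :
    e.map Function.Embedding.inl ∪ f.map Function.Embedding.inr = e.disjSum f := by
  ext (v | w) <;> simp

lemma lagPoly_joinEdges [DecidableEq V] [DecidableEq W] (r s : ℕ) (EG : Finset (Finset V))
    (EH : Finset (Finset W)) (x : V ⊕ W → ℝ) :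
    lagPoly (r + s) (joinEdges EG EH) x
      = (r + s).choose r * lagPoly r EG (x ∘ Sum.inl) * lagPoly s EH (x ∘ Sum.inr) := by
  have hfac : ((r + s).factorial : ℝ) = (r + s).choose r * r.factorial * s.factorial := by
    rw [Nat.choose_symm_add]
    exact_mod_cast (Nat.add_choose_mul_factorial_mul_factorial r s).symm
  have hsum : ∑ e ∈ joinEdges EG EH, ∏ i ∈ e, x i
      = (∑ e ∈ EG, ∏ v ∈ e, x (.inl v)) * ∑ f ∈ EH, ∏ w ∈ f, x (.inr w) := by
    simp only [joinEdges, map_inl_union_map_inr_eq_disjSum]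
    rw [sum_image fun p _ q _ h => Prod.ext (disjSum_inj.1 h).1 (disjSum_inj.1 h).2,
      sum_product, sum_mul_sum]
    exact sum_congr rfl fun e _ => sum_congr rfl fun f _ => prod_disjSum e f x
  simp only [lagPoly, hsum, hfac, Function.comp_apply]
  ring

lemma sumElim_smul_mem_stdSimplex [Fintype V] [Fintype W] {a b : ℝ} (ha : 0 ≤ a) (hb : 0 ≤ b)
    (hab : a + b = 1) {u : V → ℝ} {v : W → ℝ} (hu : u ∈ stdSimplex ℝ V)
    (hv : v ∈ stdSimplex ℝ W) : Sum.elim (a • u) (b • v) ∈ stdSimplex ℝ (V ⊕ W) := by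
  refine ⟨?_, ?_⟩
  · rintro (i | j)
    · exact mul_nonneg ha (hu.1 i)
    · exact mul_nonneg hb (hv.1 j)
  · simp only [Fintype.sum_sum_type, Sum.elim_inl, Sum.elim_inr, Pi.smul_apply, smul_eq_mul,
      ← mul_sum, hu.2, hv.2, mul_one, hab]

lemma pow_mul_pow_le_of_add_eq_one {r s : ℕ} (hr : 0 < r) (hs : 0 < s) {a b : ℝ} (ha : 0 ≤ a)
    (hb : 0 ≤ b) (hab : a + b = 1) :
    a ^ r * b ^ s ≤ (r : ℝ) ^ r * (s : ℝ) ^ s / ((r : ℝ) + s) ^ (r + s) := by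
  set n : ℝ := r + s
  have hn : 0 < n := by positivity
  have hamgm := Real.geom_mean_le_arith_mean2_weighted (w₁ := r / n) (w₂ := s / n)
    (p₁ := n * a / r) (p₂ := n * b / s) (by positivity) (by positivity) (by positivity)
    (by positivity) (by rw [← add_div, div_self hn.ne'])
  have hmean : r / n * (n * a / r) + s / n * (n * b / s) = 1 := by field_simp; exact hab
  have hpow {k : ℕ} {p : ℝ} (hp : 0 ≤ p) : (p ^ ((k : ℝ) / n)) ^ (r + s) = p ^ k := by
    rw [← Real.rpow_natCast, ← Real.rpow_mul hp, Nat.cast_add, div_mul_cancel₀ _ hn.ne',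
      Real.rpow_natCast]
  have h := pow_le_one₀ (n := r + s) (by positivity) (hamgm.trans hmean.le)
  rw [mul_pow, hpow (by positivity), hpow (by positivity), div_pow, div_pow, mul_pow, mul_pow,
    div_mul_div_comm, div_le_one (by positivity)] at h
  rw [le_div_iff₀ (by positivity), pow_add]
  linear_combination h

section Join

variable [Fintype V] [Fintype W] [DecidableEq V] [DecidableEq W] [Nonempty V] [Nonempty W]
  {r s : ℕ} {EG : Finset (Finset V)} {EH : Finset (Finset W)}

lemma lag_joinEdges_le (hr : 0 < r) (hs : 0 < s) (hEG : ∀ e ∈ EG, e.card = r)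
    (hEH : ∀ f ∈ EH, f.card = s) :
    lag (r + s) (joinEdges EG EH)
      ≤ (r + s).choose r * ((r : ℝ) ^ r * (s : ℝ) ^ s / ((r : ℝ) + s) ^ (r + s))
        * lag r EG * lag s EH := by
  refine lag_le_of_forall_lagPoly_le _ _ fun x hx => ?_
  set a := ∑ v, (x ∘ Sum.inl) v
  set b := ∑ w, (x ∘ Sum.inr) w
  have hxl : 0 ≤ x ∘ Sum.inl := fun v => hx.1 _
  have hxr : 0 ≤ x ∘ Sum.inr := fun w => hx.1 _
  have ha : 0 ≤ a := sum_nonneg fun v _ => hxl v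
  have hb : 0 ≤ b := sum_nonneg fun w _ => hxr w
  have hab : a + b = 1 := (Fintype.sum_sum_type x).symm.trans hx.2
  have hG := lagPoly_le_sum_pow_mul_lag hEG hxl
  have hH := lagPoly_le_sum_pow_mul_lag hEH hxr
  have hGH := pow_mul_pow_le_of_add_eq_one hr hs ha hb hab
  rw [lagPoly_joinEdges]
  calc _ ≤ (r + s).choose r * (a ^ r * lag r EG) * (b ^ s * lag s EH) := by
        gcongr
        · exact lagPoly_nonneg _ _ hxr
        · exact mul_nonneg (Nat.cast_nonneg _) (mul_nonneg (pow_nonneg ha r) (lag_nonneg r EG))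
    _ = (r + s).choose r * (a ^ r * b ^ s) * lag r EG * lag s EH := by ring
    _ ≤ _ := by
        gcongr
        · exact lag_nonneg _ _
        · exact lag_nonneg _ _

lemma le_lag_joinEdges (hrs : 0 < r + s) (hEG : ∀ e ∈ EG, e.card = r)
    (hEH : ∀ f ∈ EH, f.card = s) :
    (r + s).choose r * ((r : ℝ) ^ r * (s : ℝ) ^ s / ((r : ℝ) + s) ^ (r + s))
        * lag r EG * lag s EH ≤ lag (r + s) (joinEdges EG EH) := by
  obtain ⟨u, hu, hGu⟩ := exists_lagPoly_eq_lag r EG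
  obtain ⟨v, hv, hHv⟩ := exists_lagPoly_eq_lag s EH
  have hn : (0 : ℝ) < r + s := by exact_mod_cast hrs
  have hx := sumElim_smul_mem_stdSimplex (a := r / (r + s)) (b := s / (r + s)) (by positivity)
    (by positivity) (by field_simp) hu hv
  refine le_of_eq_of_le ?_ (lagPoly_le_lag _ _ hx)
  rw [lagPoly_joinEdges, Sum.elim_comp_inl, Sum.elim_comp_inr, lagPoly_smul hEG,
    lagPoly_smul hEH, hGu, hHv, div_pow, div_pow, pow_add]
  field_simp

end Join

end Lagrangian

theorem stmt_13 {V W : Type*} [Fintype V] [Fintype W] [DecidableEq V] [DecidableEq W]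
    [Nonempty V] [Nonempty W] (r s : ℕ) (hr : 1 ≤ r) (hs : 1 ≤ s)
    (EG : Finset (Finset V)) (EH : Finset (Finset W))
    (hEG : ∀ e ∈ EG, e.card = r) (hEH : ∀ f ∈ EH, f.card = s) :
    lag (r + s) ((EG ×ˢ EH).image (fun p =>
      p.1.map (Function.Embedding.inl : V ↪ V ⊕ W) ∪
      p.2.map (Function.Embedding.inr : W ↪ V ⊕ W)))
    = lag r EG * lag s EH * ((r + s).choose r : ℝ) * (r : ℝ) ^ r * (s : ℝ) ^ s /
        ((r : ℝ) + s) ^ (r + s) := by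
  change lag (r + s) (joinEdges EG EH) = _
  rw [le_antisymm (lag_joinEdges_le hr hs hEG hEH) (le_lag_joinEdges (by omega) hEG hEH)]
  ring
end
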